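/- arXiv:1302.6584 — 3 statements merged into one kernel-verified Lean document; each statement's English description precedes it below -/
import Mathlib

section
/- Let θ : X → ℝ be a function on a finite product space X = X_A × X_B, and define Q(x_B) = log Σ_{x_A} exp(θ(x_A, x_B)). Then for every probability distribution τ on X, max_{x_B} Q(x_B) ≥ E_τ[θ(x)] + H_{A|B}(τ), where H_{A|B}(τ) = −Σ_x τ(x) log τ(x_A|x_B) is the conditional entropy. -/
/-!
For each `b`, the Gibbs variational principle (nonnegativity of the relative entropy of the
`b`-slice of `τ` with respect to the Gibbs distribution `a ↦ exp θ(a, b) / ∑ₐ exp θ(a, b)`)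
bounds the `b`-slice of `E_τ[θ] + H_{A|B}(τ)` by `τ_B(b) Q(b)`. Summing over `b` gives an
average of `Q` under the marginal `τ_B`, which is at most `max Q`.
-/

open Real Finset

theorem Real.mul_log_sub_log_le_sub {t c : ℝ} (ht : 0 ≤ t) (hc : 0 < c) :
    t * (log c - log t) ≤ c - t := by
  rcases ht.eq_or_lt with rfl | ht
  · simpa using hc.le
  · calc t * (log c - log t) = t * log (c / t) := by rw [log_div hc.ne' ht.ne']
      _ ≤ t * (c / t - 1) := by gcongr; exact log_le_sub_one_of_pos (div_pos hc ht)
      _ = c - t := by field_simp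

theorem Real.sum_mul_log_sub_log_le_sum_sub {ι : Type*} {s : Finset ι} {u v : ι → ℝ}
    (hu : ∀ i ∈ s, 0 ≤ u i) (hv : ∀ i ∈ s, 0 < v i) :
    ∑ i ∈ s, u i * (log (v i) - log (u i)) ≤ ∑ i ∈ s, v i - ∑ i ∈ s, u i := by
  rw [← sum_sub_distrib]
  exact sum_le_sum fun i hi => mul_log_sub_log_le_sub (hu i hi) (hv i hi)

theorem Real.sum_mul_sub_sum_mul_log_add_mul_log_sum_le {ι : Type*} [Fintype ι] {u : ι → ℝ}
    (hu : ∀ i, 0 ≤ u i) (w : ι → ℝ) :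
    ∑ i, u i * w i - ∑ i, u i * log (u i) + (∑ i, u i) * log (∑ i, u i)
      ≤ (∑ i, u i) * log (∑ i, exp (w i)) := by
  set S := ∑ i, u i
  set T := ∑ i, exp (w i)
  rcases (sum_nonneg fun i _ => hu i : 0 ≤ S).eq_or_lt with hS | hS
  · have hu0 : ∀ i, u i = 0 := fun i =>
      (sum_eq_zero_iff_of_nonneg fun i _ => hu i).mp hS.symm i (mem_univ i)
    simp [hu0, S, ← hS]
  have hT : 0 < T := by
    obtain ⟨i, -, -⟩ := exists_ne_zero_of_sum_ne_zero hS.ne'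
    exact sum_pos (fun i _ => exp_pos _) ⟨i, mem_univ i⟩
  -- compare `u` with the Gibbs weights `S exp(w i) / T`, which have the same total mass `S`
  set v : ι → ℝ := fun i => S * exp (w i) / T
  have hv : ∀ i, 0 < v i := fun i => div_pos (mul_pos hS (exp_pos _)) hT
  have hv_sum : ∑ i, v i = S := by
    simp only [v, ← sum_div, ← mul_sum]
    exact mul_div_cancel_right₀ S hT.ne'
  have hlog_v : ∀ i, log (v i) = log S + w i - log T := fun i => by
    rw [log_div (mul_pos hS (exp_pos _)).ne' hT.ne', log_mul hS.ne' (exp_pos _).ne', log_exp]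
  have h := sum_mul_log_sub_log_le_sum_sub (s := univ) (fun i _ => hu i) (fun i _ => hv i)
  simp only [hlog_v, hv_sum, mul_sub, mul_add, sum_sub_distrib, sum_add_distrib,
    ← sum_mul] at h
  linarith

theorem maxQ_ge_free_energy_general
    {XA XB : Type*} [Fintype XA] [Fintype XB] [Nonempty XB]
    (θ : XA × XB → ℝ) (τ : XA × XB → ℝ)
    (hτ0 : ∀ x, 0 ≤ τ x) (hτ1 : ∑ x, τ x = 1) :
    let Q : XB → ℝ := fun b => Real.log (∑ a, Real.exp (θ (a, b)))
    let H : ℝ := -∑ x, τ x * Real.log (τ x)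
    let HB : ℝ := -∑ b, (∑ a, τ (a, b)) * Real.log (∑ a, τ (a, b))
    Finset.univ.sup' Finset.univ_nonempty Q ≥ (∑ x, τ x * θ x) + (H - HB) := by
  intro Q H HB
  set p : XB → ℝ := fun b => ∑ a, τ (a, b)
  have hp1 : ∑ b, p b = 1 := by rw [← hτ1, ← Fintype.sum_prod_type_right]
  have hslices : (∑ x, τ x * θ x) + (H - HB) = ∑ b, (∑ a, τ (a, b) * θ (a, b)
      - ∑ a, τ (a, b) * log (τ (a, b)) + p b * log (p b)) := by
    simp only [H, HB, Fintype.sum_prod_type_right, sum_add_distrib, sum_sub_distrib]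
    ring
  calc (∑ x, τ x * θ x) + (H - HB)
      ≤ ∑ b, p b * Q b := hslices ▸ sum_le_sum fun b _ =>
        sum_mul_sub_sum_mul_log_add_mul_log_sum_le (fun a => hτ0 (a, b)) _
    _ = univ.centerMass p Q := (centerMass_eq_of_sum_1 _ _ hp1).symm
    _ ≤ univ.sup' univ_nonempty Q :=
        centerMass_le_sup (fun b _ => sum_nonneg fun a _ => hτ0 (a, b)) (hp1 ▸ one_pos)

/-- For any distribution τ on X_A × X_B,  max_{x_B} Q(x_B) ≥ E_τ[θ] + H_{A|B}(τ). -/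
theorem maxQ_ge_free_energy
    {XA XB : Type*} [Fintype XA] [Fintype XB] [Nonempty XA] [Nonempty XB]
    (θ : XA × XB → ℝ) (τ : XA × XB → ℝ)
    (hτ0 : ∀ x, 0 ≤ τ x) (hτ1 : ∑ x, τ x = 1) :
    let Q : XB → ℝ := fun b => Real.log (∑ a, Real.exp (θ (a, b)))
    let H : ℝ := -∑ x, τ x * Real.log (τ x)
    let HB : ℝ := -∑ b, (∑ a, τ (a, b)) * Real.log (∑ a, τ (a, b))
    Finset.univ.sup' Finset.univ_nonempty Q ≥ (∑ x, τ x * θ x) + (H - HB) :=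
  maxQ_ge_free_energy_general θ τ hτ0 hτ1
end

section
/- Let θ : X → ℝ on a finite product space X = X_A × X_B and Q(x_B) = log Σ_{x_A} exp(θ(x_A, x_B)). Then max_{x_B} Q(x_B) = max over probability distributions τ on X of { E_τ[θ] + H_{A|B}(τ) }, and the maximum is attained by the distribution τ*(x_A, x_B) = 1[x_B = x_B*] · p(x_A | x_B), where x_B* maximizes Q and p(x_A|x_B) = exp(θ(x_A,x_B) − Q(x_B)). -/
open Real Finset

variable {XA XB : Type*} [Fintype XA] [Fintype XB] [DecidableEq XB]

/-- Q(x_B) = log Σ_{x_A} exp θ(x_A, x_B). -/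
noncomputable def Qfun (θ : XA × XB → ℝ) (b : XB) : ℝ :=
  Real.log (∑ a, Real.exp (θ (a, b)))

/-- Conditional entropy H_{A|B}(τ) = H(τ) − H_B(τ), with the 0 log 0 = 0 convention. -/
noncomputable def HAB (τ : XA × XB → ℝ) : ℝ :=
  (-∑ x, τ x * Real.log (τ x)) -
    (-∑ b, (∑ a, τ (a, b)) * Real.log (∑ a, τ (a, b)))

/-- τ is a probability mass function. -/
def IsPMF {X : Type*} [Fintype X] (τ : X → ℝ) : Prop :=
  (∀ x, 0 ≤ τ x) ∧ ∑ x, τ x = 1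

/-!
Splitting the sum over `x = (a, b)` by columns, `E_τ[θ] + H_{A|B}(τ)` is the sum over `b` of
`m_b · (E_{τ(·|b)}[θ(·, b)] + H(τ(·|b)))`, where `m_b` is the mass of column `b`. By Gibbs'
variational principle the bracket is at most `Q(b)`, with equality for `τ(·|b) = p(·|b)`. Hence the
objective is at most `Σ_b m_b Q(b) ≤ max_b Q(b)`, and `τ*`, which puts all its mass on the column
`x_B*` and has conditional `p(·|x_B*)` there, attains this bound.
-/

lemma mul_log_sub_mul_log_le {t p : ℝ} (ht : 0 ≤ t) (hp : 0 < p) :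
    t * log p - t * log t ≤ p - t := by
  rcases ht.eq_or_lt with rfl | ht
  · simpa using hp.le
  · have h := mul_le_mul_of_nonneg_left (log_le_sub_one_of_pos (div_pos hp ht)) ht.le
    rw [log_div hp.ne' ht.ne', mul_sub, mul_sub, mul_div_cancel₀ _ ht.ne', mul_one] at h
    linarith

section Gibbs

variable {ι : Type*} [Fintype ι]

/-- The softmax `exp θ i / Σ_j exp θ j`. -/
noncomputable def gibbs (θ : ι → ℝ) (i : ι) : ℝ :=
  exp (θ i - log (∑ j, exp (θ j)))

/-- For `w` of total mass `m`, this is `E_w[θ] + m · H(w / m)`. -/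
noncomputable def variationalObjective (θ w : ι → ℝ) : ℝ :=
  ∑ i, w i * θ i - ∑ i, w i * log (w i) + (∑ i, w i) * log (∑ i, w i)

lemma sum_exp_pos [Nonempty ι] (θ : ι → ℝ) : 0 < ∑ i, exp (θ i) :=
  sum_pos (fun i _ => exp_pos (θ i)) univ_nonempty

lemma gibbs_pos (θ : ι → ℝ) (i : ι) : 0 < gibbs θ i :=
  exp_pos _

lemma log_gibbs (θ : ι → ℝ) (i : ι) : log (gibbs θ i) = θ i - log (∑ j, exp (θ j)) :=
  log_exp _

lemma sum_gibbs [Nonempty ι] (θ : ι → ℝ) : ∑ i, gibbs θ i = 1 := by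
  simp only [gibbs, exp_sub, exp_log (sum_exp_pos θ), ← sum_div]
  exact div_self (sum_exp_pos θ).ne'

lemma variationalObjective_gibbs [Nonempty ι] (θ : ι → ℝ) :
    variationalObjective θ (gibbs θ) = log (∑ i, exp (θ i)) := by
  simp only [variationalObjective, log_gibbs, sum_gibbs, log_one, mul_zero, add_zero,
    ← sum_sub_distrib, ← mul_sub, sub_sub_cancel, ← sum_mul, one_mul]

lemma variationalObjective_le [Nonempty ι] (θ w : ι → ℝ) (hw : ∀ i, 0 ≤ w i) :
    variationalObjective θ w ≤ (∑ i, w i) * log (∑ i, exp (θ i)) := by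
  set m := ∑ i, w i
  rcases (sum_nonneg fun i _ => hw i : 0 ≤ m).eq_or_lt with hm | hm
  · have hw0 : ∀ i, w i = 0 := fun i =>
      (sum_eq_zero_iff_of_nonneg fun j _ => hw j).mp hm.symm i (mem_univ i)
    simp [m, variationalObjective, hw0]
  -- compare `w` with the Gibbs distribution rescaled to the same mass `m`
  have hlog : ∀ i, log (m * gibbs θ i) = log m + θ i - log (∑ j, exp (θ j)) := fun i => by
    rw [log_mul hm.ne' (gibbs_pos θ i).ne', log_gibbs]; ring
  have key : ∑ i, (w i * log (m * gibbs θ i) - w i * log (w i)) ≤ 0 :=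
    calc ∑ i, (w i * log (m * gibbs θ i) - w i * log (w i))
        ≤ ∑ i, (m * gibbs θ i - w i) :=
          sum_le_sum fun i _ => mul_log_sub_mul_log_le (hw i) (mul_pos hm (gibbs_pos θ i))
      _ = 0 := by rw [sum_sub_distrib, ← mul_sum, sum_gibbs, mul_one, sub_self]
  simp only [hlog, mul_sub, mul_add, sum_sub_distrib, sum_add_distrib, ← sum_mul] at key
  rw [variationalObjective]
  linarith

end Gibbs

lemma sum_mul_add_HAB_eq {α β : Type*} [Fintype α] [Fintype β] (θ τ : α × β → ℝ) :
    ∑ x, τ x * θ x + HAB τ =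
      ∑ b, variationalObjective (fun a => θ (a, b)) (fun a => τ (a, b)) := by
  simp only [HAB, variationalObjective, Fintype.sum_prod_type_right, sum_add_distrib,
    sum_sub_distrib]
  ring

theorem marginal_MAP_duality_general [Nonempty XA] (θ : XA × XB → ℝ)
    (xBs : XB) (hmax : ∀ b, Qfun θ b ≤ Qfun θ xBs) :
    let τs : XA × XB → ℝ := fun x =>
      if x.2 = xBs then Real.exp (θ x - Qfun θ x.2) else 0
    IsPMF τs ∧
    (∑ x, τs x * θ x) + HAB τs = Qfun θ xBs ∧
    (∀ τ : XA × XB → ℝ, IsPMF τ → (∑ x, τ x * θ x) + HAB τ ≤ Qfun θ xBs) := by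
  intro τs
  have hcol : (fun a => τs (a, xBs)) = gibbs (fun a => θ (a, xBs)) := by
    funext a; simp [τs, gibbs, Qfun]
  have hcol_ne {b} (hb : b ≠ xBs) : (fun a => τs (a, b)) = 0 := by
    funext a; simp [τs, hb]
  have hsum_single {f : XB → (XA → ℝ) → ℝ} (hf : ∀ b, f b 0 = 0) :
      ∑ b, f b (fun a => τs (a, b)) = f xBs (gibbs fun a => θ (a, xBs)) := by
    rw [sum_eq_single xBs (fun b _ hb => by rw [hcol_ne hb, hf]) (by simp), hcol]
  refine ⟨⟨fun x => ?_, ?_⟩, ?_, fun τ ⟨hτ, hτ1⟩ => ?_⟩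
  · by_cases hx : x.2 = xBs <;> simp [τs, hx, (exp_pos _).le]
  · rw [Fintype.sum_prod_type_right, hsum_single (f := fun _ w => ∑ a, w a) (by simp), sum_gibbs]
  · rw [sum_mul_add_HAB_eq, hsum_single (f := fun b => variationalObjective (fun a => θ (a, b)))
      (by simp [variationalObjective])]
    exact variationalObjective_gibbs _
  · have hm : ∀ b, 0 ≤ ∑ a, τ (a, b) := fun b => sum_nonneg fun a _ => hτ (a, b)
    calc ∑ x, τ x * θ x + HAB τ
        ≤ ∑ b, (∑ a, τ (a, b)) * Qfun θ b := by
          rw [sum_mul_add_HAB_eq]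
          exact sum_le_sum fun b _ => variationalObjective_le _ _ fun a => hτ (a, b)
      _ ≤ ∑ b, (∑ a, τ (a, b)) * Qfun θ xBs :=
          sum_le_sum fun b _ => mul_le_mul_of_nonneg_left (hmax b) (hm b)
      _ = Qfun θ xBs := by rw [← sum_mul, ← Fintype.sum_prod_type_right, hτ1, one_mul]

/-- Dual representation of marginal MAP:  max_{x_B} Q(x_B) equals the maximum of
E_τ[θ] + H_{A|B}(τ) over all distributions τ, attained by
τ*(x_A,x_B) = 1[x_B = x_B*] exp(θ(x_A,x_B) − Q(x_B)). -/
theorem marginal_MAP_duality [Nonempty XA] [Nonempty XB] (θ : XA × XB → ℝ)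
    (xBs : XB) (hmax : ∀ b, Qfun θ b ≤ Qfun θ xBs) :
    let τs : XA × XB → ℝ := fun x =>
      if x.2 = xBs then Real.exp (θ x - Qfun θ x.2) else 0
    IsPMF τs ∧
    (∑ x, τs x * θ x) + HAB τs = Qfun θ xBs ∧
    (∀ τ : XA × XB → ℝ, IsPMF τ → (∑ x, τ x * θ x) + HAB τ ≤ Qfun θ xBs) :=
  marginal_MAP_duality_general θ xBs hmax
end

section
/- If x_B* is the unique maximizer of Q(x_B) = log Σ_{x_A} exp(θ(x_A, x_B)), then the unique maximizer of τ ↦ E_τ[θ] + H_{A|B}(τ) over the probability simplex on X_A × X_B is τ*(x_A, x_B) = 1[x_B = x_B*] · exp(θ(x_A, x_B*) − Q(x_B*)). -/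
open Real Finset

variable {XA XB : Type*} [Fintype XA] [Fintype XB] [DecidableEq XB]

/-!
Split the objective along the fibres `x_B = b`. A fibre carrying mass `m` with unnormalised
conditional `t` contributes `∑ t θ - ∑ t log t + m log m`, and Gibbs' inequality
`∑ t log y ≤ ∑ t log t` (for `∑ t = ∑ y`), applied with `y = m · exp (θ(·, b) - Q(b))`, bounds
this by `m · Q(b)`, with equality exactly when `t = y`. Hence the objective is at most the
average of `Q` under the `B`-marginal, so at most `Q(x_B*)`; equality forces every fibre to be
Gibbs and, since `x_B*` is the strict maximiser, the marginal to be the point mass at `x_B*`.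
-/

theorem sub_le_mul_log_sub_mul_log {t y : ℝ} (ht : 0 ≤ t) (hy : 0 < y) :
    t - y ≤ t * log t - t * log y := by
  rcases ht.eq_or_lt with rfl | ht
  · simpa using hy.le
  have h := mul_le_mul_of_nonneg_left (self_sub_one_le_mul_log (div_nonneg ht.le hy.le)) hy.le
  rwa [log_div ht.ne' hy.ne', mul_sub, mul_div_cancel₀ _ hy.ne', ← mul_assoc,
    mul_div_cancel₀ _ hy.ne', mul_one, mul_sub] at h

theorem sub_lt_mul_log_sub_mul_log {t y : ℝ} (ht : 0 ≤ t) (hy : 0 < y) (hne : t ≠ y) :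
    t - y < t * log t - t * log y := by
  rcases ht.eq_or_lt with rfl | ht
  · simpa using hy
  have h := mul_lt_mul_of_pos_left (self_sub_one_lt_mul_log (div_nonneg ht.le hy.le)
    (by rwa [Ne, div_eq_one_iff_eq hy.ne'])) hy
  rwa [log_div ht.ne' hy.ne', mul_sub, mul_div_cancel₀ _ hy.ne', ← mul_assoc,
    mul_div_cancel₀ _ hy.ne', mul_one, mul_sub] at h

section Gibbs

variable {α : Type*} [Fintype α] {t y : α → ℝ}

theorem sum_mul_log_le_sum_mul_log (ht : ∀ a, 0 ≤ t a) (hy : ∀ a, 0 < y a)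
    (hsum : ∑ a, t a = ∑ a, y a) : ∑ a, t a * log (y a) ≤ ∑ a, t a * log (t a) := by
  have h := sum_le_sum fun a (_ : a ∈ univ) => sub_le_mul_log_sub_mul_log (ht a) (hy a)
  rw [sum_sub_distrib, sum_sub_distrib, hsum, sub_self] at h
  linarith

theorem sum_mul_log_lt_sum_mul_log (ht : ∀ a, 0 ≤ t a) (hy : ∀ a, 0 < y a)
    (hsum : ∑ a, t a = ∑ a, y a) (hne : t ≠ y) :
    ∑ a, t a * log (y a) < ∑ a, t a * log (t a) := by
  obtain ⟨a, ha⟩ := Function.ne_iff.1 hne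
  have h := sum_lt_sum (fun a (_ : a ∈ univ) => sub_le_mul_log_sub_mul_log (ht a) (hy a))
    ⟨a, mem_univ a, sub_lt_mul_log_sub_mul_log (ht a) (hy a) ha⟩
  rw [sum_sub_distrib, sum_sub_distrib, hsum, sub_self] at h
  linarith

end Gibbs

section Fiber

variable {α : Type*} [Fintype α] (θ : α → ℝ)

noncomputable def gibbsDist (a : α) : ℝ :=
  exp (θ a - log (∑ b, exp (θ b)))

noncomputable def fiberFreeEnergy (t : α → ℝ) : ℝ :=
  ∑ a, t a * θ a - ∑ a, t a * log (t a) + (∑ a, t a) * log (∑ a, t a)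

theorem sum_gibbsDist [Nonempty α] : ∑ a, gibbsDist θ a = 1 := by
  have hZ : 0 < ∑ a, exp (θ a) := sum_pos (fun a _ => exp_pos _) univ_nonempty
  simp only [gibbsDist, exp_sub, exp_log hZ, ← sum_div, div_self hZ.ne']

theorem sum_mul_gibbsDist [Nonempty α] (c : ℝ) : ∑ a, c * gibbsDist θ a = c := by
  rw [← mul_sum, sum_gibbsDist, mul_one]

theorem gibbsDist_pos (a : α) : 0 < gibbsDist θ a := exp_pos _

theorem log_gibbsDist (a : α) : log (gibbsDist θ a) = θ a - log (∑ b, exp (θ b)) := log_exp _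

theorem fiberFreeEnergy_eq_of_sum_pos {t : α → ℝ} (hm : 0 < ∑ a, t a) :
    fiberFreeEnergy θ t = (∑ a, t a) * log (∑ a, exp (θ a))
      + ∑ a, t a * log ((∑ b, t b) * gibbsDist θ a) - ∑ a, t a * log (t a) := by
  simp only [fiberFreeEnergy, log_mul hm.ne' (gibbsDist_pos θ _).ne', log_gibbsDist, mul_add,
    mul_sub, sum_add_distrib, sum_sub_distrib, ← sum_mul]
  ring

theorem fiberFreeEnergy_mul_gibbsDist [Nonempty α] {c : ℝ} (hc : 0 ≤ c) :
    fiberFreeEnergy θ (fun a => c * gibbsDist θ a) = c * log (∑ a, exp (θ a)) := by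
  rcases hc.eq_or_lt with rfl | hc
  · simp [fiberFreeEnergy]
  rw [fiberFreeEnergy_eq_of_sum_pos θ (by rwa [sum_mul_gibbsDist]), sum_mul_gibbsDist,
    add_sub_cancel_right]

theorem fiberFreeEnergy_le [Nonempty α] {t : α → ℝ} (ht : 0 ≤ t) :
    fiberFreeEnergy θ t ≤ (∑ a, t a) * log (∑ a, exp (θ a)) := by
  rcases (sum_nonneg fun a _ => ht a).eq_or_lt with hm | hm
  · obtain rfl := (Fintype.sum_eq_zero_iff_of_nonneg ht).1 hm.symm
    simp [fiberFreeEnergy]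
  rw [fiberFreeEnergy_eq_of_sum_pos θ hm]
  linarith [sum_mul_log_le_sum_mul_log ht (fun a => mul_pos hm (gibbsDist_pos θ a))
    (sum_mul_gibbsDist θ _).symm]

theorem eq_mul_gibbsDist_of_fiberFreeEnergy_eq [Nonempty α] {t : α → ℝ} (ht : 0 ≤ t)
    (h : fiberFreeEnergy θ t = (∑ a, t a) * log (∑ a, exp (θ a))) :
    t = fun a => (∑ b, t b) * gibbsDist θ a := by
  rcases (sum_nonneg fun a _ => ht a).eq_or_lt with hm | hm
  · obtain rfl := (Fintype.sum_eq_zero_iff_of_nonneg ht).1 hm.symm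
    simp only [Pi.zero_apply, sum_const_zero, zero_mul]
    rfl
  by_contra hne
  rw [fiberFreeEnergy_eq_of_sum_pos θ hm] at h
  linarith [sum_mul_log_lt_sum_mul_log ht (fun a => mul_pos hm (gibbsDist_pos θ a))
    (sum_mul_gibbsDist θ _).symm hne]

end Fiber

namespace IsPMF

variable {ι : Type*} [Fintype ι] {w f : ι → ℝ}

theorem sum_mul_le (hw : IsPMF w) {M : ℝ} (hf : ∀ i, f i ≤ M) : ∑ i, w i * f i ≤ M :=
  calc ∑ i, w i * f i ≤ ∑ i, w i * M :=
        sum_le_sum fun i _ => mul_le_mul_of_nonneg_left (hf i) (hw.1 i)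
    _ = M := by rw [← sum_mul, hw.2, one_mul]

theorem eq_single_of_le_sum_mul [DecidableEq ι] (hw : IsPMF w) {i₀ : ι}
    (hf : ∀ i ≠ i₀, f i < f i₀) (h : f i₀ ≤ ∑ i, w i * f i) :
    w = Pi.single i₀ 1 := by
  have hgap_nonneg (i : ι) : 0 ≤ w i * (f i₀ - f i) := by
    refine mul_nonneg (hw.1 i) (sub_nonneg.2 ?_)
    rcases eq_or_ne i i₀ with rfl | hi
    exacts [le_rfl, (hf i hi).le]
  have hgap : ∑ i, w i * (f i₀ - f i) = 0 := by
    refine le_antisymm ?_ (sum_nonneg fun i _ => hgap_nonneg i)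
    simp only [mul_sub, sum_sub_distrib, ← sum_mul, hw.2, one_mul]
    linarith
  have hzero : ∀ i ≠ i₀, w i = 0 := fun i hi =>
    (mul_eq_zero.1 ((sum_eq_zero_iff_of_nonneg fun j _ => hgap_nonneg j).1 hgap i (mem_univ i))
      ).resolve_right (sub_pos.2 (hf i hi)).ne'
  funext i
  rcases eq_or_ne i i₀ with rfl | hi
  · rw [Pi.single_eq_same, ← hw.2, sum_eq_single i (fun j _ hj => hzero j hj) (by simp)]
  · rw [Pi.single_eq_of_ne hi, hzero i hi]

end IsPMF

theorem isPMF_single {ι : Type*} [Fintype ι] [DecidableEq ι] (i : ι) :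
    IsPMF (Pi.single i 1 : ι → ℝ) :=
  ⟨fun j => by rcases eq_or_ne j i with rfl | hj <;> simp [*], by simp⟩

section Product

variable {α β : Type*} [Fintype α] [Fintype β] (θ : α × β → ℝ)

def sndMarginal (τ : α × β → ℝ) (b : β) : ℝ := ∑ a, τ (a, b)

noncomputable def condGibbs (w : β → ℝ) (x : α × β) : ℝ :=
  w x.2 * gibbsDist (fun a => θ (a, x.2)) x.1

theorem sum_mul_add_HAB_eq_sum_fiberFreeEnergy (τ : α × β → ℝ) :
    ∑ x, τ x * θ x + HAB τ =
      ∑ b, fiberFreeEnergy (fun a => θ (a, b)) (fun a => τ (a, b)) := by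
  simp only [HAB, fiberFreeEnergy, Fintype.sum_prod_type_right, sum_add_distrib, sum_sub_distrib]
  ring

theorem IsPMF.sndMarginal {τ : α × β → ℝ} (hτ : IsPMF τ) : IsPMF (sndMarginal τ) :=
  ⟨fun b => sum_nonneg fun a _ => hτ.1 (a, b),
    by rw [← hτ.2, Fintype.sum_prod_type_right]; rfl⟩

variable [Nonempty α]

theorem sum_mul_add_HAB_le {τ : α × β → ℝ} (hτ : ∀ x, 0 ≤ τ x) :
    ∑ x, τ x * θ x + HAB τ ≤ ∑ b, sndMarginal τ b * Qfun θ b := by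
  rw [sum_mul_add_HAB_eq_sum_fiberFreeEnergy]
  exact sum_le_sum fun b _ => fiberFreeEnergy_le _ fun a => hτ (a, b)

theorem eq_condGibbs_of_sum_mul_add_HAB_eq {τ : α × β → ℝ} (hτ : ∀ x, 0 ≤ τ x)
    (h : ∑ x, τ x * θ x + HAB τ = ∑ b, sndMarginal τ b * Qfun θ b) :
    τ = condGibbs θ (sndMarginal τ) := by
  rw [sum_mul_add_HAB_eq_sum_fiberFreeEnergy] at h
  have hfib := (sum_eq_sum_iff_of_le fun b _ => fiberFreeEnergy_le _ fun a => hτ (a, b)).1 h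
  funext ⟨a, b⟩
  exact congrFun (eq_mul_gibbsDist_of_fiberFreeEnergy_eq _ (fun a => hτ (a, b))
    (hfib b (mem_univ b))) a

theorem sum_mul_add_HAB_condGibbs {w : β → ℝ} (hw : ∀ b, 0 ≤ w b) :
    ∑ x, condGibbs θ w x * θ x + HAB (condGibbs θ w) = ∑ b, w b * Qfun θ b := by
  rw [sum_mul_add_HAB_eq_sum_fiberFreeEnergy]
  exact sum_congr rfl fun b _ => fiberFreeEnergy_mul_gibbsDist _ (hw b)

theorem IsPMF.condGibbs {w : β → ℝ} (hw : IsPMF w) : IsPMF (condGibbs θ w) := by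
  refine ⟨fun x => mul_nonneg (hw.1 _) (gibbsDist_pos _ _).le, ?_⟩
  simp only [Fintype.sum_prod_type_right, _root_.condGibbs, sum_mul_gibbsDist]
  exact hw.2

end Product

theorem marginal_MAP_unique_maximizer_general [Nonempty XA] (θ : XA × XB → ℝ)
    (xBs : XB) (huniq : ∀ b, b ≠ xBs → Qfun θ b < Qfun θ xBs) :
    let τs : XA × XB → ℝ := fun x =>
      if x.2 = xBs then Real.exp (θ (x.1, xBs) - Qfun θ xBs) else 0
    IsPMF τs ∧
    (∑ x, τs x * θ x) + HAB τs = Qfun θ xBs ∧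
    (∀ τ : XA × XB → ℝ, IsPMF τ → (∑ x, τ x * θ x) + HAB τ ≤ Qfun θ xBs) ∧
    (∀ τ : XA × XB → ℝ, IsPMF τ →
      (∑ x, τ x * θ x) + HAB τ = Qfun θ xBs → τ = τs) := by
  intro τs
  have hτs : τs = condGibbs θ (Pi.single xBs 1) := by
    funext ⟨a, b⟩
    rcases eq_or_ne b xBs with rfl | hb <;> simp [τs, condGibbs, gibbsDist, Qfun, *]
  have hQ : ∀ b, Qfun θ b ≤ Qfun θ xBs := fun b =>
    (eq_or_ne b xBs).elim (fun hb => hb ▸ le_rfl) fun hb => (huniq b hb).le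
  have hfibers (τ : XA × XB → ℝ) (hτ : IsPMF τ) :
      ∑ x, τ x * θ x + HAB τ ≤ ∑ b, sndMarginal τ b * Qfun θ b :=
    sum_mul_add_HAB_le θ hτ.1
  have hmix (τ : XA × XB → ℝ) (hτ : IsPMF τ) :
      ∑ b, sndMarginal τ b * Qfun θ b ≤ Qfun θ xBs :=
    hτ.sndMarginal.sum_mul_le hQ
  refine ⟨hτs ▸ (isPMF_single xBs).condGibbs θ, ?_,
    fun τ hτ => (hfibers τ hτ).trans (hmix τ hτ), fun τ hτ hmax => ?_⟩
  · rw [hτs, sum_mul_add_HAB_condGibbs θ (isPMF_single xBs).1]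
    simp [Pi.single_apply]
  have h₁ := hfibers τ hτ
  have h₂ := hmix τ hτ
  have hw := hτ.sndMarginal.eq_single_of_le_sum_mul huniq (by linarith)
  rw [eq_condGibbs_of_sum_mul_add_HAB_eq θ hτ.1 (by linarith), hw, hτs]

/-- If x_B* is the unique maximizer of Q, then
τ*(x_A,x_B) = 1[x_B = x_B*] exp(θ(x_A,x_B*) − Q(x_B*)) is the unique maximizer of
τ ↦ E_τ[θ] + H_{A|B}(τ) over the probability simplex. -/
theorem marginal_MAP_unique_maximizer [Nonempty XA] [Nonempty XB] (θ : XA × XB → ℝ)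
    (xBs : XB) (huniq : ∀ b, b ≠ xBs → Qfun θ b < Qfun θ xBs) :
    let τs : XA × XB → ℝ := fun x =>
      if x.2 = xBs then Real.exp (θ (x.1, xBs) - Qfun θ xBs) else 0
    IsPMF τs ∧
    (∑ x, τs x * θ x) + HAB τs = Qfun θ xBs ∧
    (∀ τ : XA × XB → ℝ, IsPMF τ → (∑ x, τ x * θ x) + HAB τ ≤ Qfun θ xBs) ∧
    (∀ τ : XA × XB → ℝ, IsPMF τ →
      (∑ x, τ x * θ x) + HAB τ = Qfun θ xBs → τ = τs) :=
  marginal_MAP_unique_maximizer_general θ xBs huniq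
end
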